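/- arXiv:1703.08900 — 8 statements merged into one kernel-verified Lean document; each statement's English description precedes it below -/
import Mathlib

section
/- Let K, F, Z, S be positive integers with Z < F. Define f(0) = ⌈K·(F−Z)/F⌉ and, recursively, f(i) = ⌈f(i−1)·(F−Z−i)/(F−i)⌉ for 1 ≤ i ≤ F−Z−1. If a (K,F,Z,S)-PDA exists, then S ≥ Σ_{i=0}^{F−Z−1} f(i). -/
/-- A `(K, F, Z, S)` placement delivery array: an `F × K` array over
`{0, …, S-1} ∪ {*}` (with `none` playing the role of `*`) such that
(1) each integer occurs at most once in each row and in each column,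
(2) whenever two distinct cells `(a, b)` and `(c, d)` contain the same
integer, the opposite corners `(a, d)` and `(c, b)` contain `*`, and
(3) the symbol `*` occurs exactly `Z` times in each column. -/
def IsPDA (K F Z S : ℕ) (P : Fin F → Fin K → Option (Fin S)) : Prop :=
  (∀ (i : Fin F) (j j' : Fin K) (s : Fin S), P i j = some s → P i j' = some s → j = j') ∧
  (∀ (i i' : Fin F) (j : Fin K) (s : Fin S), P i j = some s → P i' j = some s → i = i') ∧
  (∀ (a c : Fin F) (b d : Fin K) (s : Fin S),
      (a, b) ≠ (c, d) → P a b = some s → P c d = some s →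
      P a d = none ∧ P c b = none) ∧
  (∀ j : Fin K, (Finset.univ.filter (fun i => P i j = none)).card = Z)

/-- There exists a `(K, F, Z, S)` placement delivery array. -/
def PDAExists (K F Z S : ℕ) : Prop :=
  ∃ P : Fin F → Fin K → Option (Fin S), IsPDA K F Z S P

/-!
Let row `i` carry the largest number `m` of integers. Double counting the `K (F - Z)` integer
cells gives `m ≥ ⌈K (F - Z) / F⌉`. The `m` integers of row `i` are distinct, and by the corner
condition none of them reappears in the array obtained by deleting row `i` and keeping only the
`m` columns where row `i` has an integer. That array has `F - 1` rows and `F - Z - 1` integers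
per column, so iterating yields `S ≥ f(0) + f(1) + ⋯`; the iteration may use the lower bound in
place of `m` because the resulting bound is monotone in the number of columns.
-/

open Finset

/-- Condition (2) of a PDA, for an array indexed by arbitrary types. -/
def HasStarCorners {I J α : Type*} (A : I → J → Option α) : Prop :=
  ∀ (a c : I) (b d : J) (s : α), (a, b) ≠ (c, d) → A a b = some s → A c d = some s →
    A a d = none ∧ A c b = none

def symbolsOn {I J α : Type*} [DecidableEq α] (A : I → J → Option α) (R : Finset I)
    (C : Finset J) : Finset α :=
  R.biUnion fun i => C.biUnion fun j => (A i j).toFinset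

section Symbols

variable {I J α : Type*} [DecidableEq α] {A : I → J → Option α}

theorem mem_symbolsOn {R : Finset I} {C : Finset J} {s : α} :
    s ∈ symbolsOn A R C ↔ ∃ i ∈ R, ∃ j ∈ C, A i j = some s := by
  simp [symbolsOn]

theorem symbolsOn_mono {R R' : Finset I} {C C' : Finset J} (hR : R ⊆ R') (hC : C ⊆ C') :
    symbolsOn A R C ⊆ symbolsOn A R' C' := fun s hs => by
  obtain ⟨i, hi, j, hj, h⟩ := mem_symbolsOn.1 hs
  exact mem_symbolsOn.2 ⟨i, hR hi, j, hC hj, h⟩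

theorem HasStarCorners.card_symbolsOn_singleton (hA : HasStarCorners A) {i : I} {C : Finset J}
    (hC : ∀ j ∈ C, A i j ≠ none) : #(symbolsOn A {i} C) = #C := by
  rw [symbolsOn, singleton_biUnion, card_biUnion]
  · refine (sum_congr rfl fun j hj => ?_).trans (card_eq_sum_ones C).symm
    obtain ⟨s, hs⟩ := Option.ne_none_iff_exists'.1 (hC j hj)
    simp [hs]
  · intro b hb d hd hbd
    refine disjoint_left.2 fun s hsb hsd => hC d hd ?_
    simp only [Option.mem_toFinset, Option.mem_def] at hsb hsd
    exact (hA i i b d s (by simpa using hbd) hsb hsd).1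

theorem HasStarCorners.disjoint_symbolsOn_singleton (hA : HasStarCorners A) {i : I}
    {R : Finset I} {C : Finset J} (hi : i ∉ R) (hC : ∀ j ∈ C, A i j ≠ none) :
    Disjoint (symbolsOn A {i} C) (symbolsOn A R C) := by
  refine disjoint_left.2 fun s hs hs' => ?_
  obtain ⟨i', hi', b, -, hb⟩ := mem_symbolsOn.1 hs
  obtain ⟨c, hc, d, hd, hd'⟩ := mem_symbolsOn.1 hs'
  obtain rfl := mem_singleton.1 hi'
  have hic : (i', b) ≠ (c, d) := fun h => hi (by rwa [(Prod.mk.inj h).1])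
  exact hC d hd (hA i' c b d s hic hb hd').1

end Symbols

theorem exists_ceil_le_card_filter {I J : Type*} (p : I → J → Prop) [∀ i j, Decidable (p i j)]
    {R : Finset I} {C : Finset J} {n : ℕ} (hR : R.Nonempty)
    (hcol : ∀ j ∈ C, n ≤ #{i ∈ R | p i j}) :
    ∃ i ∈ R, ⌈(#C * n / #R : ℚ)⌉ ≤ #{j ∈ C | p i j} := by
  obtain ⟨i, hi, hmax⟩ := R.exists_max_image (fun i => #{j ∈ C | p i j}) hR
  refine ⟨i, hi, Int.ceil_le.2 ((div_le_iff₀ (by exact_mod_cast hR.card_pos)).2 ?_)⟩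
  have hcount : #C * n ≤ #R * #{j ∈ C | p i j} := card_nsmul_le_card_nsmul' p hcol hmax
  push_cast
  exact_mod_cast hcount.trans_eq (mul_comm _ _)

/-- `pdaBound n K F` bounds the number of integers of an array with `F` rows and `K` columns,
each column holding `n` integers. -/
def pdaBound : ℕ → ℤ → ℕ → ℤ
  | 0, _, _ => 0
  | n + 1, K, F => ⌈(K * (n + 1) / F : ℚ)⌉ + pdaBound n ⌈(K * (n + 1) / F : ℚ)⌉ (F - 1)

theorem pdaBound_zero_left (n F : ℕ) : pdaBound n 0 F = 0 := by
  induction n generalizing F with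
  | zero => rfl
  | succ n ih => simp [pdaBound, ih]

theorem pdaBound_mono (n F : ℕ) : Monotone fun K => pdaBound n K F := by
  induction n generalizing F with
  | zero => exact fun _ _ _ => le_rfl
  | succ n ih =>
    intro K K' hK
    have hceil : ⌈(K * (n + 1) / F : ℚ)⌉ ≤ ⌈(K' * (n + 1) / F : ℚ)⌉ := by gcongr
    exact add_le_add hceil (ih (F - 1) hceil)

theorem sum_range_eq_pdaBound {n F : ℕ} (K : ℤ) (f : ℕ → ℤ) (hn : 0 < n) (hnF : n ≤ F)
    (hf0 : f 0 = ⌈(K * n / F : ℚ)⌉)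
    (hf : ∀ i, 1 ≤ i → i ≤ n - 1 → f i = ⌈(f (i - 1) * (n - i) / (F - i) : ℚ)⌉) :
    ∑ i ∈ range n, f i = pdaBound n K F := by
  obtain ⟨n, rfl⟩ : ∃ m, n = m + 1 := ⟨n - 1, by omega⟩
  induction n generalizing K F f with
  | zero => simp [pdaBound, hf0]
  | succ n ih =>
    have hF : ((F - 1 : ℕ) : ℚ) = F - 1 := by rw [Nat.cast_sub (by omega)]; simp
    have htail : ∑ i ∈ range (n + 1), f (i + 1) = pdaBound (n + 1) (f 0) (F - 1) := by
      refine ih (f 0) (fun i => f (i + 1)) (by omega) (by omega) ?_ fun i hi1 hin => ?_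
      · rw [hf 1 le_rfl (by omega), hF]
        push_cast
        ring_nf
      · rw [hf (i + 1) (by omega) (by omega), hF, Nat.add_sub_cancel, Nat.sub_add_cancel hi1]
        push_cast
        ring_nf
    rw [sum_range_succ', htail, add_comm, hf0]
    conv_rhs => rw [pdaBound]
    push_cast
    ring_nf

theorem HasStarCorners.pdaBound_le_card_symbolsOn {I J α : Type*} [DecidableEq I]
    [DecidableEq α] {A : I → J → Option α} (hA : HasStarCorners A) (n : ℕ) (R : Finset I)
    (C : Finset J) (hcol : ∀ j ∈ C, n ≤ #{i ∈ R | A i j ≠ none}) :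
    pdaBound n #C #R ≤ #(symbolsOn A R C) := by
  induction n generalizing R C with
  | zero => simp [pdaBound]
  | succ n ih =>
    rcases C.eq_empty_or_nonempty with rfl | ⟨j, hj⟩
    · simp [pdaBound_zero_left]
    have hR : R.Nonempty :=
      card_pos.1 ((Nat.succ_pos n).trans_le ((hcol j hj).trans (card_filter_le _ _)))
    obtain ⟨i, hiR, hi⟩ := exists_ceil_le_card_filter (fun i j => A i j ≠ none) hR hcol
    set C' := {j ∈ C | A i j ≠ none}
    have hC' : ∀ j ∈ C', A i j ≠ none := fun j hj => (mem_filter.1 hj).2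
    have hcol' : ∀ j ∈ C', n ≤ #{i' ∈ R.erase i | A i' j ≠ none} := fun j hj => by
      rw [filter_erase, card_erase_of_mem (mem_filter.2 ⟨hiR, hC' j hj⟩)]
      have := hcol j (mem_filter.1 hj).1
      omega
    have hsub := ih (R.erase i) C' hcol'
    rw [card_erase_of_mem hiR] at hsub
    push_cast at hi
    calc pdaBound (n + 1) #C #R
        = ⌈(#C * (n + 1) / #R : ℚ)⌉ +
            pdaBound n ⌈(#C * (n + 1) / #R : ℚ)⌉ (#R - 1) := by
          rw [pdaBound]; push_cast; rfl
      _ ≤ #C' + pdaBound n #C' (#R - 1) := add_le_add hi (pdaBound_mono n _ hi)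
      _ ≤ #(symbolsOn A {i} C') + #(symbolsOn A (R.erase i) C') := by
          rw [hA.card_symbolsOn_singleton hC']; gcongr
      _ = #(symbolsOn A {i} C' ∪ symbolsOn A (R.erase i) C') := by
          rw [card_union_of_disjoint (hA.disjoint_symbolsOn_singleton (notMem_erase i R) hC')]
          push_cast; rfl
      _ ≤ #(symbolsOn A R C) := by
          gcongr
          exact union_subset (symbolsOn_mono (singleton_subset_iff.2 hiR) (filter_subset _ _))
            (symbolsOn_mono (erase_subset i R) (filter_subset _ _))

theorem pda_lower_bound_sum_ceil_general (K F Z S : ℕ) (hZF : Z < F) (f : ℕ → ℤ)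
    (hf0 : f 0 = ⌈((K : ℚ) * ((F : ℚ) - (Z : ℚ))) / (F : ℚ)⌉)
    (hfi : ∀ i, 1 ≤ i → i ≤ F - Z - 1 →
      f i = ⌈((f (i - 1) : ℚ) * ((F : ℚ) - (Z : ℚ) - (i : ℚ))) / ((F : ℚ) - (i : ℚ))⌉)
    (hP : PDAExists K F Z S) :
    (S : ℤ) ≥ ∑ i ∈ Finset.range (F - Z), f i := by
  obtain ⟨P, -, -, hA : HasStarCorners P, hstar⟩ := hP
  have hn : ((F - Z : ℕ) : ℚ) = F - Z := Nat.cast_sub hZF.le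
  have hsum : ∑ i ∈ range (F - Z), f i = pdaBound (F - Z) K F :=
    sum_range_eq_pdaBound K f (by omega) (by omega) (by rw [hf0, hn, Int.cast_natCast])
      fun i hi1 hin => by rw [hfi i hi1 hin, hn]
  have hcol (j : Fin K) (_ : j ∈ univ) : F - Z ≤ #{i ∈ univ | P i j ≠ none} := by
    have := card_filter_add_card_filter_not (s := univ) fun i => P i j = none
    simp only [card_univ, Fintype.card_fin, hstar j, ← ne_eq] at this
    omega
  have hbound := hA.pdaBound_le_card_symbolsOn (F - Z) univ univ hcol
  simp only [card_univ, Fintype.card_fin] at hbound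
  rw [hsum]
  exact hbound.trans (by exact_mod_cast (card_le_univ _).trans_eq (Fintype.card_fin S))

theorem pda_lower_bound_sum_ceil (K F Z S : ℕ) (hK : 0 < K) (hZ : 0 < Z) (hS : 0 < S)
    (hZF : Z < F) (f : ℕ → ℤ)
    (hf0 : f 0 = ⌈((K : ℚ) * ((F : ℚ) - (Z : ℚ))) / (F : ℚ)⌉)
    (hfi : ∀ i, 1 ≤ i → i ≤ F - Z - 1 →
      f i = ⌈((f (i - 1) : ℚ) * ((F : ℚ) - (Z : ℚ) - (i : ℚ))) / ((F : ℚ) - (i : ℚ))⌉)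
    (hP : PDAExists K F Z S) :
    (S : ℤ) ≥ ∑ i ∈ Finset.range (F - Z), f i :=
  pda_lower_bound_sum_ceil_general K F Z S hZF f hf0 hfi hP
end

section
/- Let K, F, S be positive integers with F ≥ 2. If a (K,F,F−2,S)-PDA exists, then S ≥ ⌈2K/F⌉ + ⌈⌈2K/F⌉/(F−1)⌉. -/
/-! Row `r` of a PDA with `e` integer entries uses `e` distinct integers. Each of its columns
carries `F - Z - 1` further integers, none of which occurs in row `r` by the corner condition,
while an integer occurs in at most `F - 1` columns off row `r`; double counting gives
`e (F - Z - 1) ≤ (S - e)(F - 1)`. For `Z = F - 2` every column has two integers, so some row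
has `e ≥ ⌈2K/F⌉`, and then `S ≥ e + ⌈e/(F - 1)⌉`. -/

open Finset

section Support

variable {K F S : ℕ}

def rowSupport (P : Fin F → Fin K → Option (Fin S)) (r : Fin F) : Finset (Fin K) :=
  {j | P r j ≠ none}

def colSupport (P : Fin F → Fin K → Option (Fin S)) (j : Fin K) : Finset (Fin F) :=
  {i | P i j ≠ none}

def rowSymbols (P : Fin F → Fin K → Option (Fin S)) (r : Fin F) : Finset (Fin S) :=
  {s | ∃ j, P r j = some s}

end Support

namespace IsPDA

variable {K F Z S : ℕ} {P : Fin F → Fin K → Option (Fin S)}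

theorem card_colSupport (hP : IsPDA K F Z S P) (j : Fin K) : #(colSupport P j) = F - Z := by
  have h := card_filter_add_card_filter_not (s := univ) (fun i => P i j = none)
  rw [hP.2.2.2 j, card_univ, Fintype.card_fin] at h
  simp only [colSupport, ne_eq]
  omega

theorem sum_card_rowSupport (hP : IsPDA K F Z S P) :
    ∑ r, #(rowSupport P r) = K * (F - Z) := by
  calc ∑ r, #(rowSupport P r) = ∑ j, #(colSupport P j) := by
        simp only [rowSupport, colSupport, card_filter]
        exact sum_comm
    _ = K * (F - Z) := by simp [hP.card_colSupport]

theorem exists_mul_le_mul_card_rowSupport (hP : IsPDA K F Z S P) (hF : 0 < F) :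
    ∃ r, K * (F - Z) ≤ F * #(rowSupport P r) := by
  obtain ⟨r, -, hr⟩ := exists_le_of_sum_le (s := univ) (f := fun _ => K * (F - Z))
    (g := fun r => F * #(rowSupport P r)) (univ_nonempty_iff.2 ⟨⟨0, hF⟩⟩)
    (by simp [← mul_sum, hP.sum_card_rowSupport])
  exact ⟨r, hr⟩

theorem card_rowSymbols (hP : IsPDA K F Z S P) (r : Fin F) :
    #(rowSymbols P r) = #(rowSupport P r) := by
  apply le_antisymm
  · refine card_le_card_of_forall_subsingleton (fun s j => P r j = some s) ?_ ?_
    · intro s hs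
      obtain ⟨j, hj⟩ := (mem_filter.1 hs).2
      exact ⟨j, by simp [rowSupport, hj], hj⟩
    · intro j _ s₁ hs₁ s₂ hs₂
      exact Option.some_injective _ (hs₁.2.symm.trans hs₂.2)
  · refine card_le_card_of_forall_subsingleton (fun j s => P r j = some s) ?_ ?_
    · intro j hj
      obtain ⟨s, hs⟩ := Option.ne_none_iff_exists'.1 (mem_filter.1 hj).2
      exact ⟨s, mem_filter.2 ⟨mem_univ _, j, hs⟩, hs⟩
    · intro s _ j₁ hj₁ j₂ hj₂
      exact hP.1 r j₁ j₂ s hj₁.2 hj₂.2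

theorem notMem_rowSymbols (hP : IsPDA K F Z S P) {r i : Fin F} {j : Fin K} {s : Fin S}
    (hrj : P r j ≠ none) (hi : i ≠ r) (hs : P i j = some s) : s ∉ rowSymbols P r := by
  intro hsr
  obtain ⟨j', hj'⟩ := (mem_filter.1 hsr).2
  exact hrj (hP.2.2.1 i r j j' s (by simp [hi]) hs hj').2

theorem sub_sub_one_le_card_colSymbols_off_row (hP : IsPDA K F Z S P) {r : Fin F} {j : Fin K}
    (hrj : P r j ≠ none) :
    F - Z - 1 ≤ #{s ∈ (rowSymbols P r)ᶜ | ∃ i ≠ r, P i j = some s} := by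
  have hcol : #((colSupport P j).erase r) = F - Z - 1 := by
    rw [card_erase_of_mem (s := colSupport P j) (mem_filter.2 ⟨mem_univ _, hrj⟩),
      hP.card_colSupport]
  rw [← hcol]
  refine card_le_card_of_forall_subsingleton (fun i s => P i j = some s) ?_ ?_
  · intro i hi
    obtain ⟨hir, hi⟩ := mem_erase.1 hi
    obtain ⟨s, hs⟩ := Option.ne_none_iff_exists'.1 (mem_filter.1 hi).2
    exact ⟨s, mem_filter.2 ⟨mem_compl.2 (hP.notMem_rowSymbols hrj hir hs), i, hir, hs⟩, hs⟩
  · intro s _ i₁ hi₁ i₂ hi₂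
    exact hP.2.1 i₁ i₂ j s hi₁.2 hi₂.2

theorem card_cols_containing_off_row_le (hP : IsPDA K F Z S P) (r : Fin F) (s : Fin S) :
    #{j | ∃ i ≠ r, P i j = some s} ≤ F - 1 := by
  calc #{j | ∃ i ≠ r, P i j = some s} ≤ #(univ.erase r) := by
        refine card_le_card_of_forall_subsingleton (fun j i => i ≠ r ∧ P i j = some s) ?_ ?_
        · intro j hj
          obtain ⟨i, hir, hi⟩ := (mem_filter.1 hj).2
          exact ⟨i, mem_erase.2 ⟨hir, mem_univ _⟩, hir, hi⟩
        · intro i _ j₁ hj₁ j₂ hj₂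
          exact hP.1 i j₁ j₂ s hj₁.2.2 hj₂.2.2
    _ = F - 1 := by simp

theorem card_rowSupport_mul_le (hP : IsPDA K F Z S P) (r : Fin F) :
    #(rowSupport P r) * (F - Z - 1) ≤ #(rowSymbols P r)ᶜ * (F - 1) :=
  card_mul_le_card_mul (fun j s => ∃ i ≠ r, P i j = some s)
    (fun _ hj => hP.sub_sub_one_le_card_colSymbols_off_row (mem_filter.1 hj).2)
    (fun s _ => (card_le_card (filter_subset_filter _ (subset_univ _))).trans
      (hP.card_cols_containing_off_row_le r s))

end IsPDA

theorem pda_lower_bound_Z_eq_F_sub_two_general (K F S : ℕ) (hF : 2 ≤ F)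
    (hP : PDAExists K F (F - 2) S) :
    (S : ℤ) ≥ ⌈(2 * (K : ℚ)) / (F : ℚ)⌉ +
      ⌈((⌈(2 * (K : ℚ)) / (F : ℚ)⌉ : ℚ)) / ((F : ℚ) - 1)⌉ := by
  obtain ⟨P, hP⟩ := hP
  obtain ⟨r, hr⟩ := hP.exists_mul_le_mul_card_rowSupport (by omega)
  have hcount := hP.card_rowSupport_mul_le r
  have hS : #(rowSupport P r) + #(rowSymbols P r)ᶜ = S := by
    rw [← hP.card_rowSymbols, card_add_card_compl, Fintype.card_fin]
  set e := #(rowSupport P r)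
  set u := #(rowSymbols P r)ᶜ
  rw [show F - (F - 2) = 2 by omega] at hr
  rw [show F - (F - 2) - 1 = 1 by omega, mul_one] at hcount
  have hF0 : (0 : ℚ) < F := by positivity
  have hF1 : (0 : ℚ) < F - 1 := by
    rw [sub_pos]; exact_mod_cast hF
  have he : ⌈2 * (K : ℚ) / F⌉ ≤ e := by
    rw [Int.ceil_le, div_le_iff₀ hF0]
    exact_mod_cast (by linarith : 2 * K ≤ e * F)
  have hu : ⌈(⌈2 * (K : ℚ) / F⌉ : ℚ) / (F - 1)⌉ ≤ u := by
    rw [Int.ceil_le, div_le_iff₀ hF1]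
    calc (⌈2 * (K : ℚ) / F⌉ : ℚ) ≤ e := by exact_mod_cast he
      _ ≤ u * ((F - 1 : ℕ) : ℚ) := by exact_mod_cast hcount
      _ = u * ((F : ℚ) - 1) := by rw [Nat.cast_sub (by omega), Nat.cast_one]
  omega

theorem pda_lower_bound_Z_eq_F_sub_two (K F S : ℕ) (hK : 0 < K) (hS : 0 < S) (hF : 2 ≤ F)
    (hP : PDAExists K F (F - 2) S) :
    (S : ℤ) ≥ ⌈(2 * (K : ℚ)) / (F : ℚ)⌉ +
      ⌈((⌈(2 * (K : ℚ)) / (F : ℚ)⌉ : ℚ)) / ((F : ℚ) - 1)⌉ :=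
  pda_lower_bound_Z_eq_F_sub_two_general K F S hF hP
end

section
/- Let K, F, Z, S be positive integers with Z < F. If a (K,F,Z,S)-PDA exists, then K·(F−Z) ≤ (Z+1)·S. Consequently the maximum K for which a (K,F,Z,S)-PDA exists satisfies K_{(F,F−Z,S)} ≤ (Z+1)·S/(F−Z). -/
/-- `maxK F Z S` is the largest `K` such that a `(K, F, Z, S)`-PDA exists
(the quantity `K_{(F, F-Z, S)}` of the paper). -/
noncomputable def maxK (F Z S : ℕ) : ℕ := sSup {K : ℕ | PDAExists K F Z S}

/-!
Count the non-`*` cells of the array. Every column contains `F - Z` of them, so there are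
`K (F - Z)`. On the other hand each integer `s` fills at most `Z + 1` cells: fixing one
occurrence `(i₀, j₀)`, every other occurrence `(i, j)` forces `*` at `(i, j₀)`, and distinct
occurrences lie in distinct rows, so they inject into the `Z` stars of column `j₀`.
Hence `K (F - Z) ≤ (Z + 1) S`, and the bound on `maxK` follows by dividing by `F - Z > 0`.
-/

open Finset

lemma Finset.card_filter_ne_none_le_mul {α β : Type*} [Fintype α] [DecidableEq α] [Fintype β]
    [DecidableEq β] (g : α → Option β) (n : ℕ) (hg : ∀ b, #{x | g x = some b} ≤ n) :
    #{x | g x ≠ none} ≤ n * Fintype.card β := by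
  have hcover : ({x | g x ≠ none} : Finset α) = univ.biUnion fun b => {x | g x = some b} := by
    ext x
    simp [Option.ne_none_iff_exists']
  rw [hcover, mul_comm]
  exact card_biUnion_le_card_mul _ _ _ fun b _ => hg b

namespace IsPDA

variable {K F Z S : ℕ} {P : Fin F → Fin K → Option (Fin S)}

lemma card_filter_ne_none_column (hP : IsPDA K F Z S P) (j : Fin K) :
    #{i | P i j ≠ none} = F - Z := by
  have hsplit := card_filter_add_card_filter_not (s := univ) fun i => P i j = none
  rw [hP.2.2.2 j, card_univ, Fintype.card_fin] at hsplit
  simp only [ne_eq]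
  omega

lemma card_filter_ne_none (hP : IsPDA K F Z S P) :
    #{p : Fin F × Fin K | P p.1 p.2 ≠ none} = K * (F - Z) := by
  rw [card_filter, Fintype.sum_prod_type_right]
  simp_rw [← card_filter, hP.card_filter_ne_none_column, sum_const, card_univ,
    Fintype.card_fin, smul_eq_mul]

lemma card_filter_eq_some_le (hP : IsPDA K F Z S P) (s : Fin S) :
    #{p : Fin F × Fin K | P p.1 p.2 = some s} ≤ Z + 1 := by
  set A : Finset (Fin F × Fin K) := {p | P p.1 p.2 = some s}
  rcases A.eq_empty_or_nonempty with hA | ⟨⟨i₀, j₀⟩, h₀⟩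
  · simp [hA]
  have hP₀ : P i₀ j₀ = some s := (mem_filter.1 h₀).2
  have herase : #(A.erase (i₀, j₀)) ≤ Z := by
    rw [← hP.2.2.2 j₀]
    refine card_le_card_of_injOn Prod.fst (fun p hp => ?_) (fun p hp q hq hpq => ?_)
    · obtain ⟨hne, hp⟩ := mem_erase.1 hp
      simpa using (hP.2.2.1 p.1 i₀ p.2 j₀ s hne (mem_filter.1 hp).2 hP₀).1
    · have hps : P q.1 p.2 = some s := hpq ▸ (mem_filter.1 (mem_of_mem_erase hp)).2
      exact Prod.ext hpq (hP.1 q.1 p.2 q.2 s hps (mem_filter.1 (mem_of_mem_erase hq)).2)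
  rw [card_erase_of_mem h₀] at herase
  omega

theorem mul_le (hP : IsPDA K F Z S P) : K * (F - Z) ≤ (Z + 1) * S := by
  rw [← hP.card_filter_ne_none]
  simpa using card_filter_ne_none_le_mul (fun p : Fin F × Fin K => P p.1 p.2) (Z + 1)
    hP.card_filter_eq_some_le

end IsPDA

theorem PDAExists.mul_le {K F Z S : ℕ} (h : PDAExists K F Z S) : K * (F - Z) ≤ (Z + 1) * S :=
  h.elim fun _ hP => hP.mul_le

theorem maxK_mul_le {F Z S : ℕ} (hZF : Z < F) : maxK F Z S * (F - Z) ≤ (Z + 1) * S := by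
  have hpos : 0 < F - Z := Nat.sub_pos_of_lt hZF
  rw [← Nat.le_div_iff_mul_le hpos]
  exact csSup_le' fun K hK => (Nat.le_div_iff_mul_le hpos).2 (PDAExists.mul_le hK)

theorem pda_upper_bound_K_general (K F Z S : ℕ) (hZF : Z < F)
    (hP : PDAExists K F Z S) :
    K * (F - Z) ≤ (Z + 1) * S ∧
      (maxK F Z S : ℚ) ≤ ((Z : ℚ) + 1) * (S : ℚ) / ((F : ℚ) - (Z : ℚ)) := by
  refine ⟨hP.mul_le, ?_⟩
  have hmax : ((maxK F Z S * (F - Z) : ℕ) : ℚ) ≤ ((Z + 1) * S : ℕ) := by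
    exact_mod_cast maxK_mul_le hZF
  push_cast [Nat.cast_sub hZF.le] at hmax
  rwa [le_div_iff₀ (sub_pos.2 (Nat.cast_lt.2 hZF))]

theorem pda_upper_bound_K (K F Z S : ℕ) (hK : 0 < K) (hZ : 0 < Z) (hS : 0 < S) (hZF : Z < F)
    (hP : PDAExists K F Z S) :
    K * (F - Z) ≤ (Z + 1) * S ∧
      (maxK F Z S : ℚ) ≤ ((Z : ℚ) + 1) * (S : ℚ) / ((F : ℚ) - (Z : ℚ)) :=
  pda_upper_bound_K_general K F Z S hZF hP
end

section
/- Let K, F, Z, S be positive integers with Z < F and S ≥ F−Z. If a (K,F,Z,S)-PDA exists, then a (K, S, S−F+Z, F)-PDA exists. Consequently K_{(F,F−Z,S)} = K_{(S,F−Z,F)}, i.e., the maximum K admitting a (K,F,Z,S)-PDA equals the maximum K admitting a (K,S,S−F+Z,F)-PDA. -/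
/-!
The dual array is well defined because integers are distinct within a column: row `s` of
the dual holds `f` in column `j` iff row `f` of the original holds `s` there. Row-distinctness
and the corner condition (2) then transfer directly, and column-distinctness of the dual just
says that a cell has one entry. In a fixed column the integers of the two arrays are in
bijection, so each column of the dual has `F - Z` integers, i.e. `S - (F - Z)` stars. When
`Z ≤ F` and `F - Z ≤ S`, dualizing twice returns to the original parameters, so both kinds of
PDA exist for the same `K`.
-/

open Finset

variable {K F Z S : ℕ}

theorem card_filter_eq_none_add_card_filter_ne_none {ι α : Type*} [Fintype ι]
    (Q : ι → Option α) : #{i | Q i = none} + #{i | Q i ≠ none} = Fintype.card ι :=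
  card_filter_add_card_filter_not _

open Classical in
noncomputable def pdaDual (P : Fin F → Fin K → Option (Fin S)) : Fin S → Fin K → Option (Fin F) :=
  fun s j => if h : ∃ f, P f j = some s then some h.choose else none

section Dual

variable {P : Fin F → Fin K → Option (Fin S)}

theorem pdaDual_eq_some_iff
    (hcol : ∀ (i i' : Fin F) (j : Fin K) (s : Fin S), P i j = some s → P i' j = some s → i = i')
    {s : Fin S} {j : Fin K} {f : Fin F} : pdaDual P s j = some f ↔ P f j = some s := by
  unfold pdaDual
  split_ifs with h
  · rw [Option.some_inj]
    exact ⟨fun hf => hf ▸ h.choose_spec, fun hf => hcol _ _ _ _ h.choose_spec hf⟩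
  · simpa using fun hf => h ⟨f, hf⟩

theorem pdaDual_eq_none_iff {s : Fin S} {j : Fin K} :
    pdaDual P s j = none ↔ ∀ f, P f j ≠ some s := by
  unfold pdaDual
  split_ifs with h <;> simpa using h

theorem card_filter_pdaDual_ne_none
    (hcol : ∀ (i i' : Fin F) (j : Fin K) (s : Fin S), P i j = some s → P i' j = some s → i = i')
    (j : Fin K) :
    #{s | pdaDual P s j ≠ none} = #{f | P f j ≠ none} := by
  symm
  refine card_bij (fun f hf => (P f j).get (Option.isSome_iff_ne_none.2 (mem_filter.1 hf).2))
    ?_ ?_ ?_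
  · intro f _
    exact mem_filter.2 ⟨mem_univ _, fun h => pdaDual_eq_none_iff.1 h f (Option.some_get _).symm⟩
  · intro f _ f' _ hff'
    exact hcol f f' j _ (Option.some_get _).symm (by rw [hff']; exact (Option.some_get _).symm)
  · intro s hs
    obtain ⟨f, hf⟩ := Option.ne_none_iff_exists'.1 (mem_filter.1 hs).2
    rw [pdaDual_eq_some_iff hcol] at hf
    exact ⟨f, by simp [hf], by simp [hf]⟩

end Dual

theorem IsPDA.dual {P : Fin F → Fin K → Option (Fin S)} (hP : IsPDA K F Z S P) :
    IsPDA K S (S - (F - Z)) F (pdaDual P) := by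
  obtain ⟨hrow, hcol, hstar, hZ⟩ := hP
  have key := @pdaDual_eq_some_iff K F S P hcol
  refine ⟨?_, ?_, ?_, fun j => ?_⟩
  · intro s j j' f h h'
    exact hrow f j j' s (key.1 h) (key.1 h')
  · intro s s' j f h h'
    exact Option.some_inj.1 ((key.1 h).symm.trans (key.1 h'))
  · intro a c b d f hne hab hcd
    rw [key] at hab hcd
    have hbd : b ≠ d := by
      rintro rfl
      exact hne (by rw [Option.some_inj.1 (hab.symm.trans hcd)])
    refine ⟨pdaDual_eq_none_iff.2 fun f' hf' => ?_, pdaDual_eq_none_iff.2 fun f' hf' => ?_⟩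
    · have := (hstar f f' b d a (by simp [hbd]) hab hf').1
      simp [this] at hcd
    · have := (hstar f' f b d c (by simp [hbd]) hf' hcd).2
      simp [this] at hab
  · have hdual := card_filter_eq_none_add_card_filter_ne_none fun s => pdaDual P s j
    have hP := card_filter_eq_none_add_card_filter_ne_none fun f => P f j
    rw [Fintype.card_fin, card_filter_pdaDual_ne_none hcol] at hdual
    rw [Fintype.card_fin, hZ j] at hP
    omega

theorem PDAExists.dual (h : PDAExists K F Z S) : PDAExists K S (S - (F - Z)) F :=
  let ⟨P, hP⟩ := h
  ⟨pdaDual P, hP.dual⟩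

theorem pdaExists_iff_dual (hZF : Z ≤ F) (hSF : F - Z ≤ S) :
    PDAExists K F Z S ↔ PDAExists K S (S - (F - Z)) F := by
  refine ⟨PDAExists.dual, fun h => ?_⟩
  have hparams : F - (S - (S - (F - Z))) = Z := by omega
  simpa only [hparams] using h.dual

theorem pda_dual_general (K F Z S : ℕ) (hZF : Z < F)
    (hSF : F - Z ≤ S) (hP : PDAExists K F Z S) :
    PDAExists K S (S - (F - Z)) F ∧ maxK F Z S = maxK S (S - (F - Z)) F := by
  exact ⟨hP.dual, congrArg sSup (Set.ext fun _ => pdaExists_iff_dual hZF.le hSF)⟩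

theorem pda_dual (K F Z S : ℕ) (hK : 0 < K) (hZ : 0 < Z) (hS : 0 < S) (hZF : Z < F)
    (hSF : F - Z ≤ S) (hP : PDAExists K F Z S) :
    PDAExists K S (S - (F - Z)) F ∧ maxK F Z S = maxK S (S - (F - Z)) F :=
  pda_dual_general K F Z S hZF hSF hP
end

section
/- Let F, Z, K₁, K₂, S₁, S₂ be positive integers with Z < F. If a (K₁,F,Z,S₁)-PDA exists and a (K₂,F,Z,S₂)-PDA exists, then a (K₁+K₂, F, Z, S₁+S₂)-PDA exists. Consequently K_{(F,F−Z,S₁+S₂)} ≥ K_{(F,F−Z,S₁)} + K_{(F,F−Z,S₂)}. -/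
/-! Place the two arrays side by side and shift the symbols of the second one by `S₁`.
Cells of different blocks never share a symbol, so each PDA condition for the concatenation
reduces to the same condition for one of the two given arrays. Since `Z < F`, every column of
a PDA has a non-`*` cell, and by condition (1) its (row, symbol) pair determines the column;
hence `K ≤ F * S`, the supremum defining `maxK` is attained, and the inequality follows by
concatenating two maximal PDAs. -/

lemma Fin.castAdd_ne_natAdd {m n : ℕ} (s : Fin m) (t : Fin n) :
    Fin.castAdd n s ≠ Fin.natAdd m t := by
  rw [Ne, Fin.ext_iff, Fin.val_castAdd, Fin.val_natAdd]
  omega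

section Concat

variable {F Z K₁ K₂ S₁ S₂ : ℕ}

def pdaConcat (P : Fin F → Fin K₁ → Option (Fin S₁)) (Q : Fin F → Fin K₂ → Option (Fin S₂))
    (i : Fin F) : Fin (K₁ + K₂) → Option (Fin (S₁ + S₂)) :=
  Fin.append (fun j => (P i j).map (Fin.castAdd S₂)) (fun j => (Q i j).map (Fin.natAdd S₁))

variable (P : Fin F → Fin K₁ → Option (Fin S₁)) (Q : Fin F → Fin K₂ → Option (Fin S₂))

@[simp] lemma pdaConcat_castAdd (i : Fin F) (j : Fin K₁) :
    pdaConcat P Q i (Fin.castAdd K₂ j) = (P i j).map (Fin.castAdd S₂) :=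
  Fin.append_left _ _ j

@[simp] lemma pdaConcat_natAdd (i : Fin F) (j : Fin K₂) :
    pdaConcat P Q i (Fin.natAdd K₁ j) = (Q i j).map (Fin.natAdd S₁) :=
  Fin.append_right _ _ j

lemma pdaConcat_eq_some_and_eq_some {a c : Fin F} {j j' : Fin (K₁ + K₂)} {s : Fin (S₁ + S₂)}
    (h : pdaConcat P Q a j = some s) (h' : pdaConcat P Q c j' = some s) :
    (∃ b d t, j = Fin.castAdd K₂ b ∧ j' = Fin.castAdd K₂ d ∧ P a b = some t ∧ P c d = some t) ∨
      (∃ b d t, j = Fin.natAdd K₁ b ∧ j' = Fin.natAdd K₁ d ∧ Q a b = some t ∧ Q c d = some t) := by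
  induction j using Fin.addCases with
  | left b =>
    induction j' using Fin.addCases with
    | left d =>
      simp only [pdaConcat_castAdd, Option.map_eq_some_iff] at h h'
      obtain ⟨t, hb, rfl⟩ := h
      obtain ⟨t', hd, ht⟩ := h'
      obtain rfl := Fin.castAdd_injective _ _ ht
      exact Or.inl ⟨b, d, t', rfl, rfl, hb, hd⟩
    | right d =>
      simp only [pdaConcat_castAdd, pdaConcat_natAdd, Option.map_eq_some_iff] at h h'
      obtain ⟨t, -, rfl⟩ := h
      obtain ⟨t', -, ht⟩ := h'
      exact absurd ht.symm (Fin.castAdd_ne_natAdd t t')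
  | right b =>
    induction j' using Fin.addCases with
    | left d =>
      simp only [pdaConcat_castAdd, pdaConcat_natAdd, Option.map_eq_some_iff] at h h'
      obtain ⟨t, -, rfl⟩ := h
      obtain ⟨t', -, ht⟩ := h'
      exact absurd ht (Fin.castAdd_ne_natAdd t' t)
    | right d =>
      simp only [pdaConcat_natAdd, Option.map_eq_some_iff] at h h'
      obtain ⟨t, hb, rfl⟩ := h
      obtain ⟨t', hd, ht⟩ := h'
      obtain rfl := Fin.natAdd_injective _ _ ht
      exact Or.inr ⟨b, d, t', rfl, rfl, hb, hd⟩

lemma IsPDA.pdaConcat (hP : IsPDA K₁ F Z S₁ P) (hQ : IsPDA K₂ F Z S₂ Q) :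
    IsPDA (K₁ + K₂) F Z (S₁ + S₂) (pdaConcat P Q) := by
  obtain ⟨P_row, P_col, P_star, P_card⟩ := hP
  obtain ⟨Q_row, Q_col, Q_star, Q_card⟩ := hQ
  refine ⟨fun i j j' s h h' => ?_, fun i i' j s h h' => ?_, fun a c j j' s hne h h' => ?_,
    fun j => ?_⟩
  · rcases pdaConcat_eq_some_and_eq_some P Q h h' with
      ⟨b, d, t, rfl, rfl, hb, hd⟩ | ⟨b, d, t, rfl, rfl, hb, hd⟩
    · rw [P_row i b d t hb hd]
    · rw [Q_row i b d t hb hd]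
  · rcases pdaConcat_eq_some_and_eq_some P Q h h' with
      ⟨b, d, t, rfl, hj, hb, hd⟩ | ⟨b, d, t, rfl, hj, hb, hd⟩
    · exact P_col i i' b t hb (Fin.castAdd_injective _ _ hj ▸ hd)
    · exact Q_col i i' b t hb (Fin.natAdd_injective _ _ hj ▸ hd)
  · rcases pdaConcat_eq_some_and_eq_some P Q h h' with
      ⟨b, d, t, rfl, rfl, hb, hd⟩ | ⟨b, d, t, rfl, rfl, hb, hd⟩
    · have := P_star a c b d t (by rintro ⟨⟩; exact hne rfl) hb hd
      simp [this]
    · have := Q_star a c b d t (by rintro ⟨⟩; exact hne rfl) hb hd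
      simp [this]
  · induction j using Fin.addCases with
    | left b => simpa [Option.map_eq_none_iff] using P_card b
    | right d => simpa [Option.map_eq_none_iff] using Q_card d

lemma PDAExists.add (h₁ : PDAExists K₁ F Z S₁) (h₂ : PDAExists K₂ F Z S₂) :
    PDAExists (K₁ + K₂) F Z (S₁ + S₂) :=
  let ⟨P, hP⟩ := h₁
  let ⟨Q, hQ⟩ := h₂
  ⟨pdaConcat P Q, hP.pdaConcat P Q hQ⟩

end Concat

section Bound

variable {K F Z S : ℕ}

lemma IsPDA.le_mul (hZF : Z < F) {P : Fin F → Fin K → Option (Fin S)} (hP : IsPDA K F Z S P) :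
    K ≤ F * S := by
  obtain ⟨P_row, -, -, P_card⟩ := hP
  have exists_some : ∀ j, ∃ i s, P i j = some s := by
    intro j
    by_contra! h
    have all_none : ∀ i, P i j = none := fun i => Option.eq_none_iff_forall_ne_some.2 (h i)
    have := P_card j
    simp only [all_none, Finset.filter_true, Finset.card_univ, Fintype.card_fin] at this
    omega
  choose i s hs using exists_some
  have inj : Function.Injective fun j => (i j, s j) := fun j j' e => by
    obtain ⟨hi, hs'⟩ := Prod.mk.inj e
    exact P_row (i j) j j' (s j) (hs j) (hi ▸ hs' ▸ hs j')
  simpa using Fintype.card_le_of_injective _ inj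

lemma bddAbove_setOf_pdaExists (hZF : Z < F) : BddAbove {K | PDAExists K F Z S} :=
  ⟨F * S, fun _ ⟨_, hP⟩ => hP.le_mul hZF⟩

lemma PDAExists.le_maxK (hZF : Z < F) (h : PDAExists K F Z S) : K ≤ maxK F Z S :=
  le_csSup (bddAbove_setOf_pdaExists hZF) h

lemma PDAExists.pdaExists_maxK (hZF : Z < F) (h : PDAExists K F Z S) :
    PDAExists (maxK F Z S) F Z S :=
  Nat.sSup_mem ⟨K, h⟩ (bddAbove_setOf_pdaExists hZF)

end Bound

theorem pda_concatenate_general (F Z K₁ K₂ S₁ S₂ : ℕ) (hZF : Z < F)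
    (h₁ : PDAExists K₁ F Z S₁) (h₂ : PDAExists K₂ F Z S₂) :
    PDAExists (K₁ + K₂) F Z (S₁ + S₂) ∧
      maxK F Z S₁ + maxK F Z S₂ ≤ maxK F Z (S₁ + S₂) :=
  ⟨h₁.add h₂, ((h₁.pdaExists_maxK hZF).add (h₂.pdaExists_maxK hZF)).le_maxK hZF⟩

theorem pda_concatenate (F Z K₁ K₂ S₁ S₂ : ℕ) (hF : 0 < F) (hZ : 0 < Z) (hZF : Z < F)
    (hK₁ : 0 < K₁) (hK₂ : 0 < K₂) (hS₁ : 0 < S₁) (hS₂ : 0 < S₂)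
    (h₁ : PDAExists K₁ F Z S₁) (h₂ : PDAExists K₂ F Z S₂) :
    PDAExists (K₁ + K₂) F Z (S₁ + S₂) ∧
      maxK F Z S₁ + maxK F Z S₂ ≤ maxK F Z (S₁ + S₂) :=
  pda_concatenate_general F Z K₁ K₂ S₁ S₂ hZF h₁ h₂
end

section
/- Let S be a positive integer and let d = gcd(2,S). Then the maximum K for which a (K,2,0,S)-PDA exists equals (S−1)/2 + (d−1)/2 = (S+d−2)/2; that is, a ((S+d−2)/2, 2, 0, S)-PDA exists and no ((S+d)/2, 2, 0, S)-PDA exists. -/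
theorem pda_optimal_F_two_Z_zero (S : ℕ) (hS : 0 < S) (d : ℕ) (hd : d = Nat.gcd 2 S) :
    PDAExists ((S + d - 2) / 2) 2 0 S ∧ ¬ PDAExists ((S + d) / 2) 2 0 S := by
  have hd2 : (d = 2 ∧ 2 ∣ S) ∨ (d = 1 ∧ ¬ 2 ∣ S) := by
    rcases Nat.even_or_odd S with he | ho
    · left
      have h2 : (2 : ℕ) ∣ S := he.two_dvd
      exact ⟨hd.trans (Nat.gcd_eq_left h2), h2⟩
    · right
      have h2 : ¬ (2 : ℕ) ∣ S := by
        have := Nat.odd_iff.mp ho; omega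
      exact ⟨hd.trans (Nat.coprime_two_left.mpr ho), h2⟩
  have hK1 : 2 * ((S + d - 2) / 2) ≤ S := by omega
  have hK2 : S < 2 * ((S + d) / 2) := by omega
  constructor
  · refine ⟨fun i j => some ⟨2 * j.1 + i.1, by have := j.2; have := i.2; omega⟩, ?_, ?_, ?_, ?_⟩
    · intro i j j' s h h'
      simp only [Option.some.injEq] at h h'
      have := congrArg Fin.val (h.trans h'.symm)
      simp at this
      exact Fin.ext (by omega)
    · intro i i' j s h h'
      simp only [Option.some.injEq] at h h'
      have := congrArg Fin.val (h.trans h'.symm)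
      simp at this
      exact Fin.ext (by omega)
    · intro a c b d s hne h h'
      simp only [Option.some.injEq] at h h'
      have heq : 2 * (b : ℕ) + (a : ℕ) = 2 * (d : ℕ) + (c : ℕ) :=
        congrArg Fin.val (h.trans h'.symm)
      have ha := a.2; have hc := c.2
      have hac : a = c := Fin.ext (by omega)
      have hbd : b = d := Fin.ext (by omega)
      subst hac; subst hbd; exact absurd rfl hne
    · intro j; simp
  · rintro ⟨P, h1, h2, h3, h4⟩
    have hsome : ∀ (i : Fin 2) (j : Fin ((S + d) / 2)), (P i j).isSome := by
      intro i j
      have := h4 j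
      rw [Finset.card_eq_zero, Finset.filter_eq_empty_iff] at this
      have h := this (Finset.mem_univ i)
      cases hP : P i j with
      | none => exact absurd hP h
      | some s => rfl
    set f : Fin 2 × Fin ((S + d) / 2) → Fin S := fun p => (P p.1 p.2).get (hsome p.1 p.2) with hf
    have hinj : Function.Injective f := by
      intro p q hpq
      by_contra hne
      have hp : P p.1 p.2 = some (f p) := (Option.some_get (hsome p.1 p.2)).symm
      have hq : P q.1 q.2 = some (f p) := by
        rw [hpq]; exact (Option.some_get (hsome q.1 q.2)).symm
      have hne' : (p.1, p.2) ≠ (q.1, q.2) := by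
        simpa using hne
      have := (h3 p.1 q.1 p.2 q.2 (f p) hne' hp hq).1
      have hs := hsome p.1 q.2
      rw [this] at hs
      simp at hs
    have hcard := Fintype.card_le_of_injective f hinj
    simp [Fintype.card_prod] at hcard
    omega
end

section
/- Let m₁, m₂, r, F be positive integers with F = r·m₂ and F ≥ 2. Then the maximum K for which a (K, F, F−2, m₁F+r)-PDA exists equals (m₁·F·(F−1) + m₂·r·(r−1))/2; i.e., K_{(F,2,m₁F+r)} = m₁·K_{(F,2,F)} + m₂·K_{(r,2,r)}. -/
open Finset

/-!
Every column of a `(K, F, F - 2, S)`-PDA holds exactly two integers. Fix a row `v` with `c`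
integer entries: they carry `c` distinct integers, and by the star condition the integers in the
other cell of these columns ("partners") are disjoint from them, while each partner integer occurs
in at most `F - 1` of these columns. So either at most `m₁` partner integers occur and
`c ≤ (F - 1) m₁`, or `c + m₁ + 1 ≤ S`; since `m₁ F < S = m₁ F + r`, in both cases
`c ≤ S - m₁ - 1`. Summing over the rows, `2 K ≤ F (S - m₁ - 1) = m₁ F (F - 1) + m₂ r (r - 1)`.

Conversely, the array whose columns are the 2-subsets `{a, b}` of an `n`-set, with the entry `b` in
row `a` and `a` in row `b`, is an `(n choose 2, n, n - 2, n)`-PDA. Put `m₁` copies of it for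
`n = F` side by side with disjoint sets of integers, next to `m₂` copies of it for `n = r` placed
block-diagonally on the `F = r m₂` rows, all sharing the same `r` integers.
-/

/-- A placement delivery array with rows `R`, columns `C` and integers `L`, in which every column
has exactly `t` integer entries (so `Z = |R| - t`). -/
structure IsPDAOn {R C L : Type*} [Fintype R] (t : ℕ) (P : R → C → Option L) : Prop where
  row_inj : ∀ i j j' s, P i j = some s → P i j' = some s → j = j'
  col_inj : ∀ i i' j s, P i j = some s → P i' j = some s → i = i'
  star : ∀ a c b d s, (a, b) ≠ (c, d) → P a b = some s → P c d = some s →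
    P a d = none ∧ P c b = none
  card_isSome : ∀ j, #{i | (P i j).isSome} = t

theorem card_eq_none_add_card_isSome {R C L : Type*} [Fintype R] [DecidableEq L]
    (P : R → C → Option L) (j : C) :
    #{i | P i j = none} + #{i | (P i j).isSome} = Fintype.card R := by
  simpa [Option.ne_none_iff_isSome] using
    card_filter_add_card_filter_not (s := univ) (p := fun i => P i j = none)

theorem IsPDA.isPDAOn {K F Z S : ℕ} {P : Fin F → Fin K → Option (Fin S)}
    (h : IsPDA K F Z S P) : IsPDAOn (F - Z) P := by
  obtain ⟨row_inj, col_inj, star, card_none⟩ := h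
  refine ⟨row_inj, col_inj, star, fun j => ?_⟩
  have := card_eq_none_add_card_isSome P j
  rw [card_none, Fintype.card_fin] at this
  omega

namespace IsPDAOn

variable {R C L : Type*} [Fintype R] {t : ℕ} {P : R → C → Option L}

theorem reindex {R' C' L' : Type*} [Fintype R'] (h : IsPDAOn t P) (eR : R' ≃ R) (eC : C' ≃ C)
    (eL : L ↪ L') : IsPDAOn t (fun i j => (P (eR i) (eC j)).map eL) where
  row_inj i j j' s hj hj' := by
    simp only [Option.map_eq_some_iff] at hj hj'
    obtain ⟨a, ha, rfl⟩ := hj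
    obtain ⟨a', ha', hs⟩ := hj'
    rw [eL.injective hs] at ha'
    exact eC.injective (h.row_inj _ _ _ _ ha ha')
  col_inj i i' j s hi hi' := by
    simp only [Option.map_eq_some_iff] at hi hi'
    obtain ⟨a, ha, rfl⟩ := hi
    obtain ⟨a', ha', hs⟩ := hi'
    rw [eL.injective hs] at ha'
    exact eR.injective (h.col_inj _ _ _ _ ha ha')
  star a c b d s hne hb hd := by
    simp only [Option.map_eq_some_iff, Option.map_eq_none_iff] at hb hd ⊢
    obtain ⟨x, hx, rfl⟩ := hb
    obtain ⟨x', hx', hs⟩ := hd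
    rw [eL.injective hs] at hx'
    refine h.star _ _ _ _ x ?_ hx hx'
    simpa [eR.injective.eq_iff, eC.injective.eq_iff] using hne
  card_isSome j := by
    simp only [Option.isSome_map]
    rw [← h.card_isSome (eC j), ← Fintype.card_subtype, ← Fintype.card_subtype]
    exact Fintype.card_congr (eR.subtypeEquiv fun _ => Iff.rfl)

theorem isPDA {K F S : ℕ} {P : Fin F → Fin K → Option (Fin S)} (h : IsPDAOn t P) :
    IsPDA K F (F - t) S P :=
  ⟨h.row_inj, h.col_inj, h.star, fun j => by
    have := card_eq_none_add_card_isSome P j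
    rw [h.card_isSome, Fintype.card_fin] at this
    omega⟩

theorem pdaExists [Fintype C] [Fintype L] (h : IsPDAOn t P) :
    PDAExists (Fintype.card C) (Fintype.card R) (Fintype.card R - t) (Fintype.card L) := by
  classical
  simpa using ⟨_, (h.reindex (Fintype.equivFin R).symm (Fintype.equivFin C).symm
    (Fintype.equivFin L).toEmbedding).isPDA⟩

theorem copies (h : IsPDAOn t P) (ι : Type*) :
    IsPDAOn t (fun i (j : ι × C) => (P i j.2).map (j.1, ·)) where
  row_inj i := by
    rintro ⟨k, j⟩ ⟨k', j'⟩ s hj hj'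
    simp only [Option.map_eq_some_iff] at hj hj'
    obtain ⟨a, ha, rfl⟩ := hj
    obtain ⟨a', ha', hs⟩ := hj'
    obtain ⟨rfl, rfl⟩ := Prod.mk.inj hs
    rw [h.row_inj i j j' _ ha ha']
  col_inj i i' := by
    rintro ⟨k, j⟩ s hi hi'
    simp only [Option.map_eq_some_iff] at hi hi'
    obtain ⟨a, ha, rfl⟩ := hi
    obtain ⟨a', ha', hs⟩ := hi'
    obtain ⟨-, rfl⟩ := Prod.mk.inj hs
    exact h.col_inj i i' j _ ha ha'
  star a c := by
    rintro ⟨k, b⟩ ⟨k', d⟩ s hne hb hd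
    simp only [Option.map_eq_some_iff, Option.map_eq_none_iff] at hb hd ⊢
    obtain ⟨x, hx, rfl⟩ := hb
    obtain ⟨x', hx', hs⟩ := hd
    obtain ⟨rfl, rfl⟩ := Prod.mk.inj hs
    exact h.star a c b d x' (by simpa using hne) hx hx'
  card_isSome j := by simpa using h.card_isSome j.2

theorem append {C' L' : Type*} {P' : R → C' → Option L'} (h : IsPDAOn t P) (h' : IsPDAOn t P') :
    IsPDAOn t
      (fun i => Sum.elim (fun j => (P i j).map Sum.inl) (fun j => (P' i j).map Sum.inr)) where
  row_inj i := by
    rintro (j | j) (j' | j') s hj hj' <;>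
      simp only [Sum.elim_inl, Sum.elim_inr, Option.map_eq_some_iff] at hj hj' <;>
      obtain ⟨a, ha, rfl⟩ := hj <;> obtain ⟨a', ha', hs⟩ := hj' <;>
      simp only [reduceCtorEq, Sum.inl.injEq, Sum.inr.injEq] at hs
    · rw [h.row_inj i j j' a ha (hs ▸ ha')]
    · rw [h'.row_inj i j j' a ha (hs ▸ ha')]
  col_inj i i' := by
    rintro (j | j) s hi hi' <;>
      simp only [Sum.elim_inl, Sum.elim_inr, Option.map_eq_some_iff] at hi hi' <;>
      obtain ⟨a, ha, rfl⟩ := hi <;> obtain ⟨a', ha', hs⟩ := hi' <;>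
      simp only [Sum.inl.injEq, Sum.inr.injEq] at hs
    · exact h.col_inj i i' j a ha (hs ▸ ha')
    · exact h'.col_inj i i' j a ha (hs ▸ ha')
  star a c := by
    rintro (b | b) (d | d) s hne hb hd <;>
      simp only [Sum.elim_inl, Sum.elim_inr, Option.map_eq_some_iff, Option.map_eq_none_iff]
        at hb hd ⊢ <;>
      obtain ⟨x, hx, rfl⟩ := hb <;> obtain ⟨x', hx', hs⟩ := hd <;>
      simp only [reduceCtorEq, Sum.inl.injEq, Sum.inr.injEq] at hs
    · exact h.star a c b d x (by simpa using hne) hx (hs ▸ hx')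
    · exact h'.star a c b d x (by simpa using hne) hx (hs ▸ hx')
  card_isSome := by
    rintro (j | j)
    · simpa using h.card_isSome j
    · simpa using h'.card_isSome j

theorem blockDiag (h : IsPDAOn t P) (ι : Type*) [Fintype ι] [DecidableEq ι] :
    IsPDAOn t (fun (i : R × ι) (j : C × ι) => if i.2 = j.2 then P i.1 j.1 else none) where
  row_inj := by
    rintro ⟨i, k⟩ ⟨j, k₁⟩ ⟨j', k₂⟩ s hj hj'
    simp only [ite_eq_iff, reduceCtorEq, and_false, or_false] at hj hj'
    obtain ⟨rfl, hj⟩ := hj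
    obtain ⟨rfl, hj'⟩ := hj'
    rw [h.row_inj i j j' s hj hj']
  col_inj := by
    rintro ⟨i, k₁⟩ ⟨i', k₂⟩ ⟨j, k⟩ s hi hi'
    simp only [ite_eq_iff, reduceCtorEq, and_false, or_false] at hi hi'
    obtain ⟨rfl, hi⟩ := hi
    obtain ⟨rfl, hi'⟩ := hi'
    rw [h.col_inj i i' j s hi hi']
  star := by
    rintro ⟨a, k₁⟩ ⟨c, k₂⟩ ⟨b, k₃⟩ ⟨d, k₄⟩ s hne hb hd
    simp only [ite_eq_iff, reduceCtorEq, and_false, or_false] at hb hd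
    obtain ⟨rfl, hb⟩ := hb
    obtain ⟨rfl, hd⟩ := hd
    by_cases hk : k₁ = k₂
    · subst hk
      simpa using h.star a c b d s (by simpa using hne) hb hd
    · simp [hk, Ne.symm hk]
  card_isSome := by
    rintro ⟨j, k⟩
    have : ({x : R × ι | (if x.2 = k then P x.1 j else none).isSome} : Finset (R × ι)) =
        ({i | (P i j).isSome} : Finset R) ×ˢ {k} := by
      ext ⟨i, k'⟩
      by_cases hk : k' = k
      · simp [hk]
      · simp [hk, Ne.symm hk]
    dsimp only
    rw [this, card_product, card_singleton, mul_one, h.card_isSome]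

theorem exists_ne_isSome (h : IsPDAOn 2 P) (v : R) (j : C) :
    ∃ u ≠ v, (P u j).isSome := by
  have : 1 < #{i | (P i j).isSome} := by rw [h.card_isSome]; norm_num
  obtain ⟨u, hu, huv⟩ := (one_lt_card_iff_nontrivial.1 this).exists_ne v
  exact ⟨u, huv, (mem_filter.1 hu).2⟩

theorem card_isSome_row_le [Fintype C] (h : IsPDAOn t P) {v : R} (X : Finset (R × L))
    (hX : ∀ j, (P v j).isSome → ∃ x ∈ X, P x.1 j = some x.2) :
    #{j | (P v j).isSome} ≤ #X := by
  classical
  calc #{j | (P v j).isSome}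
      ≤ #(X.biUnion fun x => {j | P x.1 j = some x.2}) := by
        refine card_le_card fun j hj => ?_
        simpa using hX j (mem_filter.1 hj).2
    _ ≤ #X * 1 := card_biUnion_le_card_mul _ _ _ fun x _ =>
        card_le_one.2 fun j hj j' hj' =>
          h.row_inj x.1 j j' x.2 (mem_filter.1 hj).2 (mem_filter.1 hj').2
    _ = #X := mul_one _

theorem card_isSome_row_add_le [Fintype C] [Fintype L] (h : IsPDAOn 2 P) (v : R) {m : ℕ}
    (hm : m * Fintype.card R < Fintype.card L) :
    #{j | (P v j).isSome} + m + 1 ≤ Fintype.card L := by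
  classical
  set inRow : Finset L := {s | ∃ j, P v j = some s}
  set partners : Finset L := {s | ∃ u ≠ v, ∃ j, (P v j).isSome ∧ P u j = some s}
  have hA : #{j | (P v j).isSome} ≤ #inRow := by
    refine (h.card_isSome_row_le ({v} ×ˢ inRow) fun j hj => ?_).trans (by simp)
    obtain ⟨s, hs⟩ := Option.isSome_iff_exists.1 hj
    exact ⟨(v, s), by simpa [inRow] using ⟨j, hs⟩, hs⟩
  have hM : #{j | (P v j).isSome} ≤ (Fintype.card R - 1) * #partners := by
    refine (h.card_isSome_row_le ((univ.erase v) ×ˢ partners) fun j hj => ?_).trans (by simp)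
    obtain ⟨u, huv, hu⟩ := h.exists_ne_isSome v j
    obtain ⟨s, hs⟩ := Option.isSome_iff_exists.1 hu
    exact ⟨(u, s), by simpa [partners, huv] using ⟨u, huv, j, hj, hs⟩, hs⟩
  have hAM : #inRow + #partners ≤ Fintype.card L := by
    rw [← card_union_of_disjoint]
    · exact card_le_univ _
    refine disjoint_left.2 fun s hsA hsM => ?_
    obtain ⟨j, hj⟩ := (mem_filter.1 hsA).2
    obtain ⟨u, huv, j', hj', hu⟩ := (mem_filter.1 hsM).2
    have := (h.star v u j j' s (fun he => huv (Prod.mk.inj he).1.symm) hj hu).1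
    simp [this] at hj'
  obtain ⟨n, hn⟩ := Nat.exists_eq_add_one_of_ne_zero (Fintype.card_pos_iff.2 ⟨v⟩).ne'
  rw [hn, Nat.add_sub_cancel] at hM
  rw [hn] at hm
  rcases le_or_gt #partners m with hMm | hMm
  · nlinarith [Nat.mul_le_mul_left n hMm]
  · omega

theorem two_mul_card_le [Fintype C] [Fintype L] (h : IsPDAOn 2 P) {m : ℕ}
    (hm : m * Fintype.card R < Fintype.card L) :
    2 * Fintype.card C ≤ Fintype.card R * (Fintype.card L - m - 1) := by
  calc 2 * Fintype.card C = ∑ j, #{i | (P i j).isSome} := by simp [h.card_isSome, mul_comm]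
    _ = ∑ i, #{j | (P i j).isSome} := by simp only [card_filter]; exact sum_comm
    _ ≤ ∑ _i : R, (Fintype.card L - m - 1) := sum_le_sum fun i _ => by
        have := h.card_isSome_row_add_le i hm
        omega
    _ = Fintype.card R * (Fintype.card L - m - 1) := by simp

end IsPDAOn


section Pairs

variable {α : Type*} [DecidableEq α]

def pairPDA (i : α) (z : {z : Sym2 α // ¬z.IsDiag}) : Option α :=
  if h : i ∈ z.1 then some (Sym2.Mem.other' h) else none

theorem pairPDA_eq_some {i s : α} {z : {z : Sym2 α // ¬z.IsDiag}} :
    pairPDA i z = some s ↔ z.1 = s(i, s) := by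
  unfold pairPDA
  split_ifs with h
  · conv_rhs => rw [← Sym2.other_spec' h]
    rw [Option.some_inj, Sym2.congr_right]
  · simp only [false_iff]
    rintro hz
    exact h (hz ▸ Sym2.mem_mk_left i s)

theorem pairPDA_eq_none {i : α} {z : {z : Sym2 α // ¬z.IsDiag}} :
    pairPDA i z = none ↔ i ∉ z.1 := by
  unfold pairPDA
  split_ifs with h <;> simp [h]

theorem isPDAOn_pairPDA [Fintype α] : IsPDAOn 2 (pairPDA (α := α)) where
  row_inj i j j' s h h' :=
    Subtype.ext <| (pairPDA_eq_some.1 h).trans (pairPDA_eq_some.1 h').symm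
  col_inj i i' j s h h' :=
    Sym2.congr_left.1 <| (pairPDA_eq_some.1 h).symm.trans (pairPDA_eq_some.1 h')
  star a c b d s hne hb hd := by
    rw [pairPDA_eq_some] at hb hd
    have has : a ≠ s := fun has => b.2 (hb ▸ has ▸ Sym2.mk_isDiag_iff.2 rfl)
    have hcs : c ≠ s := fun hcs => d.2 (hd ▸ hcs ▸ Sym2.mk_isDiag_iff.2 rfl)
    have hac : a ≠ c := by
      rintro rfl
      exact hne (Prod.ext rfl (Subtype.ext (hb.trans hd.symm)))
    simp [pairPDA_eq_none, hb, hd, has, hcs, hac, hac.symm]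
  card_isSome z := by
    simp_rw [Option.isSome_iff_ne_none, Ne, pairPDA_eq_none, not_not, ← Sym2.mem_toFinset]
    rw [filter_mem_eq_inter, univ_inter, Sym2.card_toFinset_of_not_isDiag _ z.2]

end Pairs

theorem Nat.two_mul_choose_two (n : ℕ) : 2 * n.choose 2 = n * (n - 1) := by
  rw [Nat.choose_two_right, Nat.mul_div_cancel' (Nat.even_mul_pred_self n).two_dvd]

theorem pda_optimal_r_divides_F_general (m₁ m₂ r F : ℕ) (hF : F = r * m₂) (hF2 : 2 ≤ F) :
    IsGreatest {K : ℕ | PDAExists K F (F - 2) (m₁ * F + r)}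
      ((m₁ * F * (F - 1) + m₂ * r * (r - 1)) / 2) := by
  have hr : 0 < r := Nat.pos_of_ne_zero fun hr => by simp [hr] at hF; omega
  have h2K :
      m₁ * F * (F - 1) + m₂ * r * (r - 1) = 2 * (m₁ * F.choose 2 + r.choose 2 * m₂) := by
    rw [mul_assoc m₁, mul_assoc m₂, ← Nat.two_mul_choose_two, ← Nat.two_mul_choose_two]
    ring
  rw [h2K, Nat.mul_div_cancel_left _ two_pos]
  constructor
  · show PDAExists _ _ _ _
    have hrows : Fin F ≃ Fin r × Fin m₂ := (finCongr hF).trans finProdFinEquiv.symm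
    simpa only [Fintype.card_sum, Fintype.card_prod, Fintype.card_fin,
      Sym2.card_subtype_not_diag] using
      ((isPDAOn_pairPDA (α := Fin F)).copies (Fin m₁)).append
        (((isPDAOn_pairPDA (α := Fin r)).blockDiag (Fin m₂)).reindex hrows (Equiv.refl _)
          (Function.Embedding.refl _)) |>.pdaExists
  · rintro K ⟨P, hP⟩
    have hP2 : IsPDAOn 2 P := (show F - (F - 2) = 2 by omega) ▸ hP.isPDAOn
    have hK := hP2.two_mul_card_le (m := m₁) (by simpa using hr)
    simp only [Fintype.card_fin] at hK
    have hS : F * (m₁ * F + r - m₁ - 1) = m₁ * F * (F - 1) + m₂ * r * (r - 1) := by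
      obtain ⟨f, rfl⟩ := Nat.exists_eq_add_one_of_ne_zero (by omega : F ≠ 0)
      obtain ⟨q, rfl⟩ := Nat.exists_eq_add_one_of_ne_zero hr.ne'
      rw [show m₁ * (f + 1) + (q + 1) - m₁ - 1 = m₁ * f + q by rw [mul_add_one]; omega]
      simp only [Nat.add_sub_cancel]
      linear_combination q * hF
    linarith

theorem pda_optimal_r_divides_F (m₁ m₂ r F : ℕ) (hm₁ : 0 < m₁) (hm₂ : 0 < m₂)
    (hr : 0 < r) (hF : F = r * m₂) (hF2 : 2 ≤ F) :
    IsGreatest {K : ℕ | PDAExists K F (F - 2) (m₁ * F + r)}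
      ((m₁ * F * (F - 1) + m₂ * r * (r - 1)) / 2) :=
  pda_optimal_r_divides_F_general m₁ m₂ r F hF hF2
end

section
/- Let F ≥ 2 and m ≥ 1 be integers. Then the maximum K for which a (K, F, F−2, mF+1)-PDA exists equals m·F·(F−1)/2; i.e., K_{(F,2,mF+1)} = m·K_{(F,2,F)}. -/
namespace PDAaux

/-- Column index type: a copy index `l < m` together with an ordered pair
`a < b` of rows (encoded as `b : Fin F` and `a : Fin b.val`). -/
abbrev Col (F m : ℕ) := Fin m × Σ b : Fin F, Fin b.val

variable {F m : ℕ}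

def colA (c : Col F m) : Fin F := ⟨c.2.2.val, c.2.2.isLt.trans c.2.1.isLt⟩

def colB (c : Col F m) : Fin F := c.2.1

lemma colA_lt_colB (c : Col F m) : colA c < colB c := c.2.2.isLt

/-- The symbol attached to copy `l` and "center" row `x`. -/
def symOf (m : ℕ) (l : Fin m) (x : Fin F) : Fin (m * F + 1) :=
  ⟨l.val * F + x.val, by
    have h : (l.val + 1) * F ≤ m * F := Nat.mul_le_mul_right F l.isLt
    rw [add_mul, one_mul] at h
    have := x.isLt
    omega⟩

lemma addmul_inj {a b x y n : ℕ} (hx : x < n) (hy : y < n) (h : a * n + x = b * n + y) :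
    a = b ∧ x = y := by
  have hab : a = b := by
    rcases Nat.lt_trichotomy a b with h' | h' | h'
    · have h2 : (a + 1) * n ≤ b * n := Nat.mul_le_mul_right n h'
      rw [add_mul, one_mul] at h2; omega
    · exact h'
    · have h2 : (b + 1) * n ≤ a * n := Nat.mul_le_mul_right n h'
      rw [add_mul, one_mul] at h2; omega
  subst hab
  exact ⟨rfl, by omega⟩

lemma symOf_inj {l l' : Fin m} {x x' : Fin F} (h : symOf m l x = symOf m l' x') :
    l = l' ∧ x = x' := by
  have hv : l.val * F + x.val = l'.val * F + x'.val := congrArg Fin.val h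
  obtain ⟨h1, h2⟩ := addmul_inj x.isLt x'.isLt hv
  exact ⟨Fin.ext h1, Fin.ext h2⟩

/-- The PDA array, indexed by columns in `Col F m`. -/
def Q (c : Col F m) (r : Fin F) : Option (Fin (m * F + 1)) :=
  if r = colA c then some (symOf m c.1 (colB c))
  else if r = colB c then some (symOf m c.1 (colA c)) else none

lemma Q_some {c : Col F m} {r : Fin F} {s : Fin (m * F + 1)} (h : Q c r = some s) :
    (r = colA c ∧ s = symOf m c.1 (colB c)) ∨ (r = colB c ∧ s = symOf m c.1 (colA c)) := by
  unfold Q at h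
  split_ifs at h with h1 h2
  · exact Or.inl ⟨h1, (Option.some.inj h).symm⟩
  · exact Or.inr ⟨h2, (Option.some.inj h).symm⟩

lemma Q_none {c : Col F m} {r : Fin F} (h1 : r ≠ colA c) (h2 : r ≠ colB c) :
    Q c r = none := by
  unfold Q
  rw [if_neg h1, if_neg h2]

lemma col_ext {c c' : Col F m} (h1 : c.1 = c'.1) (hA : colA c = colA c')
    (hB : colB c = colB c') : c = c' := by
  rcases c with ⟨l, b, a⟩
  rcases c' with ⟨l', b', a'⟩
  dsimp [colA, colB] at *
  subst h1
  subst hB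
  rw [Fin.mk.injEq] at hA
  have : a = a' := Fin.ext hA
  subst this
  rfl

lemma Q_row_uniq {c c' : Col F m} {r : Fin F} {s : Fin (m * F + 1)}
    (h : Q c r = some s) (h' : Q c' r = some s) : c = c' := by
  rcases Q_some h with ⟨hr, hs⟩ | ⟨hr, hs⟩ <;> rcases Q_some h' with ⟨hr', hs'⟩ | ⟨hr', hs'⟩
  · obtain ⟨hl, hB⟩ := symOf_inj (hs.symm.trans hs')
    exact col_ext hl (hr.symm.trans hr') hB
  · obtain ⟨hl, hx⟩ := symOf_inj (hs.symm.trans hs')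
    exfalso
    have : r < r := by
      calc r = colA c := hr
        _ < colB c := colA_lt_colB c
        _ = colA c' := hx
        _ < colB c' := colA_lt_colB c'
        _ = r := hr'.symm
    exact absurd this (lt_irrefl r)
  · obtain ⟨hl, hx⟩ := symOf_inj (hs.symm.trans hs')
    exfalso
    have : r < r := by
      calc r = colA c' := hr'
        _ < colB c' := colA_lt_colB c'
        _ = colA c := hx.symm
        _ < colB c := colA_lt_colB c
        _ = r := hr.symm
    exact absurd this (lt_irrefl r)
  · obtain ⟨hl, hA⟩ := symOf_inj (hs.symm.trans hs')
    exact col_ext hl hA (hr.symm.trans hr')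

lemma Q_col_uniq {c : Col F m} {r r' : Fin F} {s : Fin (m * F + 1)}
    (h : Q c r = some s) (h' : Q c r' = some s) : r = r' := by
  rcases Q_some h with ⟨hr, hs⟩ | ⟨hr, hs⟩ <;> rcases Q_some h' with ⟨hr', hs'⟩ | ⟨hr', hs'⟩
  · exact hr.trans hr'.symm
  · exact absurd (symOf_inj (hs.symm.trans hs')).2 (ne_of_gt (colA_lt_colB c))
  · exact absurd (symOf_inj (hs.symm.trans hs')).2 (ne_of_lt (colA_lt_colB c))
  · exact hr.trans hr'.symm

lemma Q_star {c c' : Col F m} {r r' : Fin F} {s : Fin (m * F + 1)}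
    (h : Q c r = some s) (h' : Q c' r' = some s) (hrr : r ≠ r') : Q c' r = none := by
  rcases Q_some h with ⟨hr, hs⟩ | ⟨hr, hs⟩ <;> rcases Q_some h' with ⟨hr', hs'⟩ | ⟨hr', hs'⟩
  · -- colB c = colB c', r' = colA c'
    obtain ⟨hl, hB⟩ := symOf_inj (hs.symm.trans hs')
    refine Q_none (fun hc => hrr (hc.trans hr'.symm)) (fun hc => ?_)
    exact (ne_of_lt (colA_lt_colB c)) (hr.symm.trans (hc.trans hB.symm))
  · -- colB c = colA c', r' = colB c'
    obtain ⟨hl, hx⟩ := symOf_inj (hs.symm.trans hs')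
    refine Q_none (fun hc => ?_) (fun hc => hrr (hc.trans hr'.symm))
    exact (ne_of_lt (colA_lt_colB c)) (hr.symm.trans (hc.trans hx.symm))
  · -- colA c = colB c', r' = colA c'
    obtain ⟨hl, hx⟩ := symOf_inj (hs.symm.trans hs')
    refine Q_none (fun hc => hrr (hc.trans hr'.symm)) (fun hc => ?_)
    exact (ne_of_gt (colA_lt_colB c)) (hr.symm.trans (hc.trans hx.symm))
  · -- colA c = colA c', r' = colB c'
    obtain ⟨hl, hA⟩ := symOf_inj (hs.symm.trans hs')
    refine Q_none (fun hc => ?_) (fun hc => hrr (hc.trans hr'.symm))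
    exact (ne_of_gt (colA_lt_colB c)) (hr.symm.trans (hc.trans hA.symm))

lemma Q_filter_ne (c : Col F m) :
    Finset.univ.filter (fun i => Q c i ≠ none) = {colA c, colB c} := by
  ext i
  simp only [Finset.mem_filter, Finset.mem_univ, true_and, Finset.mem_insert,
    Finset.mem_singleton]
  constructor
  · intro hi
    by_contra hcon
    push_neg at hcon
    exact hi (Q_none hcon.1 hcon.2)
  · rintro (rfl | rfl)
    · unfold Q; rw [if_pos rfl]; simp
    · unfold Q; rw [if_neg (ne_of_gt (colA_lt_colB c)), if_pos rfl]; simp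

lemma Q_star_card (c : Col F m) :
    (Finset.univ.filter (fun i => Q c i = none)).card = F - 2 := by
  have h1 := Finset.card_filter_add_card_filter_not
    (s := (Finset.univ : Finset (Fin F))) (p := fun i => Q c i = none)
  have h2 : (Finset.univ.filter (fun i => ¬ Q c i = none)).card = 2 := by
    have : (Finset.univ.filter (fun i => ¬ Q c i = none)) = {colA c, colB c} :=
      Q_filter_ne c
    rw [this]
    exact Finset.card_pair (ne_of_lt (colA_lt_colB c))
  simp only [Finset.card_univ, Fintype.card_fin] at h1
  omega

lemma card_col (hF : 2 ≤ F) : Fintype.card (Col F m) = m * F * (F - 1) / 2 := by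
  have h1 : Fintype.card (Col F m) = m * ∑ b : Fin F, b.val := by
    simp [Col, Fintype.card_sigma]
  have h2 : ∑ b : Fin F, b.val = ∑ i ∈ Finset.range F, i :=
    Fin.sum_univ_eq_sum_range (fun i => i) F
  have h3 : ∑ i ∈ Finset.range F, i = F * (F - 1) / 2 := by
    rw [Finset.sum_range_id]
  have hdvd : 2 ∣ F * (F - 1) := by
    have h4 : F - 1 + 1 = F := by omega
    have h5 : Even ((F - 1) * (F - 1 + 1)) := Nat.even_mul_succ_self (F - 1)
    rw [h4, mul_comm] at h5
    exact h5.two_dvd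
  rw [h1, h2, h3, ← Nat.mul_div_assoc m hdvd, ← mul_assoc]

theorem pda_exists (hF : 2 ≤ F) (hm : 1 ≤ m) :
    PDAExists (m * F * (F - 1) / 2) F (F - 2) (m * F + 1) := by
  classical
  let e : Col F m ≃ Fin (m * F * (F - 1) / 2) := Fintype.equivFinOfCardEq (card_col hF)
  refine ⟨fun r k => Q (e.symm k) r, ?_, ?_, ?_, ?_⟩
  · intro i j j' s h h'
    exact e.symm.injective (Q_row_uniq h h')
  · intro i i' j s h h'
    exact Q_col_uniq h h'
  · intro a c b d s hne h h'
    have hac : a ≠ c := by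
      rintro rfl
      exact hne (by rw [e.symm.injective (Q_row_uniq h h')])
    exact ⟨Q_star h h' hac, Q_star h' h hac.symm⟩
  · intro j
    exact Q_star_card (e.symm j)

theorem pda_bound (hF : 2 ≤ F) (hm : 1 ≤ m) {K : ℕ}
    (h : PDAExists K F (F - 2) (m * F + 1)) : K ≤ m * F * (F - 1) / 2 := by
  classical
  obtain ⟨x, rfl⟩ : ∃ x, F = x + 1 := ⟨F - 1, by omega⟩
  have hx : 1 ≤ x := by omega
  obtain ⟨P, h1, h2, h3, h4⟩ := h
  set Dv : Fin (x + 1) → Finset (Fin K) :=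
    fun v => Finset.univ.filter (fun j => P v j ≠ none) with hDv
  -- every column has exactly two non-star entries
  have colcard : ∀ j : Fin K, (Finset.univ.filter (fun i => P i j ≠ none)).card = 2 := by
    intro j
    have ha := Finset.card_filter_add_card_filter_not
      (s := (Finset.univ : Finset (Fin (x + 1)))) (p := fun i => P i j = none)
    simp only [Finset.card_univ, Fintype.card_fin] at ha
    have hb := h4 j
    simp only [ne_eq]
    omega
  -- ∑ degrees = 2K
  have hsum : ∑ v : Fin (x + 1), (Dv v).card = 2 * K := by
    have step : ∀ v, (Dv v).card = ∑ j : Fin K, if P v j ≠ none then 1 else 0 := by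
      intro v; rw [hDv]; exact Finset.card_filter _ _
    calc ∑ v : Fin (x + 1), (Dv v).card
        = ∑ v : Fin (x + 1), ∑ j : Fin K, if P v j ≠ none then 1 else 0 := by
          exact Finset.sum_congr rfl (fun v _ => step v)
      _ = ∑ j : Fin K, ∑ v : Fin (x + 1), if P v j ≠ none then 1 else 0 :=
          Finset.sum_comm
      _ = ∑ j : Fin K, (Finset.univ.filter (fun i => P i j ≠ none)).card := by
          exact Finset.sum_congr rfl (fun j _ => (Finset.card_filter _ _).symm)
      _ = ∑ j : Fin K, 2 := Finset.sum_congr rfl (fun j _ => colcard j)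
      _ = 2 * K := by simp [mul_comm]
  -- per-row degree bound
  have hdegle : ∀ v : Fin (x + 1), (Dv v).card ≤ m * x := by
    intro v
    set d0 : Fin (m * (x + 1) + 1) := ⟨0, by omega⟩ with hd0
    set g : Fin K → Fin (m * (x + 1) + 1) := fun j => (P v j).getD d0 with hg
    have hgspec : ∀ j : Fin K, P v j ≠ none → P v j = some (g j) := by
      intro j hj
      rcases hP : P v j with _ | s
      · exact absurd hP hj
      · simp [hg, hP]
    -- the set A of symbols in row v
    set A : Finset (Fin (m * (x + 1) + 1)) := (Dv v).image g with hA
    have hcardA : A.card = (Dv v).card := by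
      apply Finset.card_image_of_injOn
      intro j hj j' hj' hgj
      have hj1 : P v j ≠ none := (Finset.mem_filter.mp hj).2
      have hj2 : P v j' ≠ none := (Finset.mem_filter.mp hj').2
      exact h1 v j j' (g j) (hgspec j hj1) (hgj ▸ hgspec j' hj2)
    -- opposite rows
    have hopp : ∀ j ∈ Dv v, ∃ u, u ≠ v ∧ P u j ≠ none := by
      intro j hj
      have hc := colcard j
      obtain ⟨u, hu, hune⟩ := Finset.exists_mem_ne (by omega :
        1 < (Finset.univ.filter (fun i => P i j ≠ none)).card) v
      exact ⟨u, hune, (Finset.mem_filter.mp hu).2⟩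
    choose! u hu1 hu2 using hopp
    set opp : Fin K → Fin (m * (x + 1) + 1) := fun j => (P (u j) j).getD d0 with hoppdef
    have hoppspec : ∀ j ∈ Dv v, P (u j) j = some (opp j) := by
      intro j hj
      rcases hP : P (u j) j with _ | s
      · exact absurd hP (hu2 j hj)
      · simp [hoppdef, hP]
    set B : Finset (Fin (m * (x + 1) + 1)) := (Dv v).image opp with hB
    -- deg ≤ |B| * x
    have hdegB : (Dv v).card ≤ B.card * x := by
      have hfib := Finset.card_eq_sum_card_fiberwise
        (f := opp) (s := Dv v) (t := B)
        (fun j hj => Finset.mem_image_of_mem opp hj)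
      rw [hfib]
      have hfible : ∀ s ∈ B, ((Dv v).filter (fun j => opp j = s)).card ≤ x := by
        intro s hs
        have : ((Dv v).filter (fun j => opp j = s)).card ≤
            (Finset.univ.erase v).card := by
          apply Finset.card_le_card_of_injOn u
          · intro j hj
            have hj' := Finset.mem_filter.mp hj
            exact Finset.mem_erase.mpr ⟨hu1 j hj'.1, Finset.mem_univ _⟩
          · intro j hj j' hj' huu
            have hj1 := Finset.mem_filter.mp hj
            have hj2 := Finset.mem_filter.mp hj'
            have e1 : P (u j) j = some s := hj1.2 ▸ hoppspec j hj1.1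
            have e2 : P (u j) j' = some s := by
              rw [huu]; exact hj2.2 ▸ hoppspec j' hj2.1
            exact h1 (u j) j j' s e1 e2
        calc ((Dv v).filter (fun j => opp j = s)).card
            ≤ (Finset.univ.erase v).card := this
          _ = x := by
              rw [Finset.card_erase_of_mem (Finset.mem_univ v)]
              simp
        done
      calc ∑ s ∈ B, ((Dv v).filter (fun j => opp j = s)).card
          ≤ ∑ s ∈ B, x := Finset.sum_le_sum hfible
        _ = B.card * x := by rw [Finset.sum_const, smul_eq_mul]
    -- A and B are disjoint
    have hdisj : Disjoint A B := by
      rw [Finset.disjoint_left]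
      intro s hsA hsB
      obtain ⟨j, hj, hjs⟩ := Finset.mem_image.mp hsA
      obtain ⟨j', hj', hjs'⟩ := Finset.mem_image.mp hsB
      have e1 : P v j = some s := hjs ▸ hgspec j (Finset.mem_filter.mp hj).2
      have e2 : P (u j') j' = some s := hjs' ▸ hoppspec j' hj'
      have hne : ((v, j) : Fin (x + 1) × Fin K) ≠ (u j', j') := by
        intro hEq
        exact (hu1 j' hj') (congrArg Prod.fst hEq).symm
      have hnone := (h3 v (u j') j j' s hne e1 e2).1
      exact (Finset.mem_filter.mp hj').2 hnone
    -- |A| + |B| ≤ S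
    have hAB : A.card + B.card ≤ m * (x + 1) + 1 := by
      rw [← Finset.card_union_of_disjoint hdisj]
      calc (A ∪ B).card ≤ Fintype.card (Fin (m * (x + 1) + 1)) :=
            Finset.card_le_univ _
        _ = m * (x + 1) + 1 := Fintype.card_fin _
    -- combine
    have hexp : m * (x + 1) + 1 = m * x + m + 1 := by ring
    rcases le_or_gt B.card m with hb | hb
    · exact hdegB.trans (Nat.mul_le_mul_right x hb)
    · omega
  -- finish
  have htot : 2 * K ≤ (x + 1) * (m * x) := by
    rw [← hsum]
    calc ∑ v : Fin (x + 1), (Dv v).card ≤ ∑ v : Fin (x + 1), m * x :=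
          Finset.sum_le_sum (fun v _ => hdegle v)
      _ = (x + 1) * (m * x) := by rw [Finset.sum_const, smul_eq_mul]; simp
  rw [Nat.le_div_iff_mul_le (by norm_num : 0 < 2)]
  have : m * (x + 1) * (x + 1 - 1) = (x + 1) * (m * x) := by
    have : x + 1 - 1 = x := by omega
    rw [this]; ring
  omega

end PDAaux

theorem pda_optimal_S_eq_mF_add_one (F m : ℕ) (hF : 2 ≤ F) (hm : 1 ≤ m) :
    IsGreatest {K : ℕ | PDAExists K F (F - 2) (m * F + 1)} (m * F * (F - 1) / 2) := by
  constructor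
  · exact PDAaux.pda_exists hF hm
  · intro K hK
    exact PDAaux.pda_bound hF hm hK
end
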